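/- arXiv:2205.04424 — 2 statements merged into one kernel-verified Lean document; each statement's English description precedes it below -/
import Mathlib

section
/- Policy improvement for (ε,δ)-greedy policies: if μ' is the (ε,δ)-greedy policy derived from the action-value function Q^μ of an (ε,δ)-greedy policy μ (i.e., μ' puts probability 1-ε on the argmax of Q^μ(s,·), δ_e/|A(s)| uniformly on all actions, and δ_b on a fixed biased action a_b), then the expected value under μ' dominates that under μ: for every state s, Σ_a μ'(s,a) Q^μ(s,a) ≥ Σ_a μ(s,a) Q^μ(s,a). -/
open Finset

theorem eps_delta_greedy_policy_improvement {S A : Type*} [DecidableEq A]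
    (Aset : S → Finset A) (hne : ∀ s, (Aset s).Nonempty)
    (Q : S → A → ℝ)
    (δb δe : ℝ) (hδb : 0 ≤ δb) (hδe : 0 ≤ δe)
    (ε : ℝ) (hε : ε = δb + δe) (hε1 : ε ≤ 1)
    (astar ab : S → A) (hstar : ∀ s, astar s ∈ Aset s) (hab : ∀ s, ab s ∈ Aset s)
    (hmax : ∀ s, ∀ a ∈ Aset s, Q s a ≤ Q s (astar s))
    (μ' : S → A → ℝ)
    (hμ' : ∀ s, ∀ a ∈ Aset s, μ' s a = (1 - ε) * (if a = astar s then 1 else 0)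
        + δe / (Aset s).card + δb * (if a = ab s then 1 else 0))
    (μ : S → A → ℝ)
    (hμ1 : ∀ s, ∑ a ∈ Aset s, μ s a = 1)
    (hμlb : ∀ s, ∀ a ∈ Aset s,
        δe / (Aset s).card + δb * (if a = ab s then 1 else 0) ≤ μ s a) :
    ∀ s, ∑ a ∈ Aset s, μ' s a * Q s a ≥ ∑ a ∈ Aset s, μ s a * Q s a := by
  intro s
  set b : A → ℝ := fun a => δe / (Aset s).card + δb * (if a = ab s then 1 else 0) with hb
  have hcard : ((Aset s).card : ℝ) ≠ 0 := by
    have := Finset.card_pos.mpr (hne s)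
    positivity
  have hsumb : ∑ a ∈ Aset s, b a = ε := by
    simp only [hb, Finset.sum_add_distrib, Finset.sum_const, nsmul_eq_mul, Finset.mul_sum]
    rw [← Finset.mul_sum, Finset.sum_ite_eq' (Aset s) (ab s) (fun _ => (1:ℝ))]
    simp [hab s, hε]
    field_simp
    ring
  -- μ' sum
  have hμ'sum : ∑ a ∈ Aset s, μ' s a * Q s a
      = (1 - ε) * Q s (astar s) + ∑ a ∈ Aset s, b a * Q s a := by
    have : ∀ a ∈ Aset s, μ' s a * Q s a
        = (1 - ε) * ((if a = astar s then 1 else 0) * Q s a) + b a * Q s a := by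
      intro a ha; rw [hμ' s a ha]; ring
    rw [Finset.sum_congr rfl this, Finset.sum_add_distrib, ← Finset.mul_sum]
    congr 1
    congr 1
    rw [Finset.sum_congr rfl (fun a (_ : a ∈ Aset s) =>
      (by split <;> simp : (if a = astar s then (1:ℝ) else 0) * Q s a
        = (if a = astar s then Q s a else 0))),
      Finset.sum_ite_eq' (Aset s) (astar s) (fun a => Q s a)]
    simp [hstar s]
  -- μ sum decomposition
  have hμsum : ∑ a ∈ Aset s, μ s a * Q s a
      = ∑ a ∈ Aset s, (μ s a - b a) * Q s a + ∑ a ∈ Aset s, b a * Q s a := by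
    rw [← Finset.sum_add_distrib]
    exact Finset.sum_congr rfl (fun a _ => by ring)
  have hkey : ∑ a ∈ Aset s, (μ s a - b a) * Q s a ≤ (1 - ε) * Q s (astar s) := by
    have h1 : ∑ a ∈ Aset s, (μ s a - b a) * Q s a
        ≤ ∑ a ∈ Aset s, (μ s a - b a) * Q s (astar s) := by
      apply Finset.sum_le_sum
      intro a ha
      have hw : 0 ≤ μ s a - b a := sub_nonneg.mpr (hμlb s a ha)
      exact mul_le_mul_of_nonneg_left (hmax s a ha) hw
    have h2 : ∑ a ∈ Aset s, (μ s a - b a) * Q s (astar s) = (1 - ε) * Q s (astar s) := by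
      rw [← Finset.sum_mul, Finset.sum_sub_distrib, hμ1 s, hsumb]
    linarith
  rw [hμ'sum, hμsum]
  linarith
end

section
/- If for every state s the policy μ' satisfies Σ_a μ'(s,a) Q^μ(s,a) ≥ U^μ(s) where U^μ(s) = Σ_a μ(s,a) Q^μ(s,a), and Q^μ satisfies the Bellman consistency Q^μ(s,a) = Σ_{s'} P(s,a,s')[R(s,a,s') + γ U^μ(s')], then in a finite MDP with discount γ ∈ [0,1) the value of μ' dominates that of μ: U^{μ'}(s) ≥ U^μ(s) for all s (policy improvement theorem for stochastic policies). -/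
open Finset

theorem policy_improvement_theorem {S A : Type*} [Fintype S]
    (Aset : S → Finset A) (hne : ∀ s, (Aset s).Nonempty)
    (P : S → A → S → ℝ) (hP0 : ∀ s a s', 0 ≤ P s a s')
    (hP1 : ∀ s, ∀ a ∈ Aset s, ∑ s', P s a s' = 1)
    (R : S → A → S → ℝ) (γ : ℝ) (hγ0 : 0 ≤ γ) (hγ1 : γ < 1)
    (μ μ' : S → A → ℝ)
    (hμ0 : ∀ s, ∀ a ∈ Aset s, 0 ≤ μ s a) (hμ1 : ∀ s, ∑ a ∈ Aset s, μ s a = 1)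
    (hμ'0 : ∀ s, ∀ a ∈ Aset s, 0 ≤ μ' s a) (hμ'1 : ∀ s, ∑ a ∈ Aset s, μ' s a = 1)
    (U Uq : S → ℝ) (Qf Qf' : S → A → ℝ)
    (hU : ∀ s, U s = ∑ a ∈ Aset s, μ s a * Qf s a)
    (hQ : ∀ s, ∀ a ∈ Aset s, Qf s a = ∑ s', P s a s' * (R s a s' + γ * U s'))
    (hU' : ∀ s, Uq s = ∑ a ∈ Aset s, μ' s a * Qf' s a)
    (hQ' : ∀ s, ∀ a ∈ Aset s, Qf' s a = ∑ s', P s a s' * (R s a s' + γ * Uq s'))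
    (himp : ∀ s, U s ≤ ∑ a ∈ Aset s, μ' s a * Qf s a) :
    ∀ s, U s ≤ Uq s := by
  intro s
  set f : S → ℝ := fun s => U s - Uq s with hf
  obtain ⟨t, -, ht⟩ := Finset.exists_max_image (univ : Finset S) f ⟨s, mem_univ s⟩
  suffices h : f t ≤ 0 by
    have := ht s (mem_univ s)
    simp only [hf] at this h ⊢
    linarith
  have step : ∀ a ∈ Aset t, Qf t a - Qf' t a ≤ γ * f t := by
    intro a ha
    rw [hQ t a ha, hQ' t a ha, ← Finset.sum_sub_distrib]
    calc ∑ s', (P t a s' * (R t a s' + γ * U s') - P t a s' * (R t a s' + γ * Uq s'))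
        ≤ ∑ s', P t a s' * (γ * f t) := by
          refine Finset.sum_le_sum fun s' _ => ?_
          have h1 := ht s' (mem_univ s')
          have h2 := hP0 t a s'
          simp only [hf] at h1 ⊢
          nlinarith [mul_le_mul_of_nonneg_left (mul_le_mul_of_nonneg_left h1 hγ0) h2]
      _ = γ * f t := by rw [← Finset.sum_mul, hP1 t a ha, one_mul]
  have key : f t ≤ γ * f t := by
    have h1 : U t - Uq t ≤ ∑ a ∈ Aset t, μ' t a * Qf t a - ∑ a ∈ Aset t, μ' t a * Qf' t a := by
      have := himp t
      rw [hU' t]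
      linarith
    calc f t ≤ ∑ a ∈ Aset t, (μ' t a * Qf t a - μ' t a * Qf' t a) := by
          rw [Finset.sum_sub_distrib]; exact h1
      _ ≤ ∑ a ∈ Aset t, μ' t a * (γ * f t) := by
          refine Finset.sum_le_sum fun a ha => ?_
          have := step a ha
          have h0 := hμ'0 t a ha
          nlinarith
      _ = γ * f t := by rw [← Finset.sum_mul, hμ'1 t, one_mul]
  nlinarith
end
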